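/- In the partition setting under Assumptions (D), (M) and (B), for all 1 ≤ k < n, every bounded measurable f, every i ∈ I_k and every p ≥ 1: ‖q̂_{k,k+1}(f)‖_{k,i,2p}^{2p} ≤ m_{k,k+1}(i)^{2p}·γ^{2p−2}·( α·max_{l∈s_{k+1}(i)} ‖f‖_{k+1,l,2p}^{2p} + β·max_{l∈s_{k+1}(i)} ‖f‖_{k+1,l,p}^{2p} ). Consequently ‖q̂_{k,k+1}(f)‖_{k,2p}^{2p} ≤ A_{k,k+1}^{2p}·γ^{2p−2}·(α+β)·‖f‖_{k+1,2p}^{2p}. -/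

import Mathlib

/-!
Fix `i ∈ I_k`. By (D), for `x ∈ F_i` the measure `K_k(x)` lives on `F_i`, where (B) bounds the
density `ḡ_{k,k+1}` by `γ · m_{k,k+1}(i)`. Hölder's inequality against this weight gives, pointwise
on `F_i`, `|q̂(f)|^{2p} ≤ (γ m)^{2p-2} q̂(|f|^p)^2`. Integrating over `μ_{k,i}` and applying (M) to
`|f|^p` bounds `‖q̂(f)‖_{k,i,2p}^{2p}` by
`m^{2p} γ^{2p-2} (α μ_{k+1,i}(|f|^{2p}) + β μ_{k+1,i}(|f|^p)^2)`, and an average over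
`F_i = ⋃_{l ∈ s_{k+1}(i)} F_l` is at most the largest average over the pieces. The global bound
follows by taking maxima, using `‖f‖_p ≤ ‖f‖_{2p}` for probability measures.
-/

open MeasureTheory

variable {E : Type} [MeasurableSpace E]
variable {I : ℕ → Type} [∀ k, Fintype (I k)] [∀ k, Nonempty (I k)] [∀ k, DecidableEq (I k)]

/-- The restricted (normalized) measure μ_{k,j}: the restriction of `μ` to the
partition element `S`, normalized to a probability measure. -/
noncomputable def muLoc (μ : Measure E) (S : Set E) : Measure E := (μ S)⁻¹ • μ.restrict S

/-- The local L_p-norm ‖f‖_{k,j,p} = μ_{k,j}(|f|^p)^{1/p}. -/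
noncomputable def locNorm (ν : Measure E) (p : ℝ) (f : E → ℝ) : ℝ :=
  (∫ x, |f x| ^ p ∂ν) ^ (1/p)

/-- The norm ‖f‖_{k,p} = max_{j ∈ I_k} ‖f‖_{k,j,p}. -/
noncomputable def maxNorm (μ : ℕ → Measure E) (F : ∀ k, I k → Set E) (k : ℕ) (p : ℝ)
    (f : E → ℝ) : ℝ :=
  Finset.univ.sup' Finset.univ_nonempty fun j : I k => locNorm (muLoc (μ k) (F k j)) p f

/-- The relative mass change m_{k,k+1}(j) = μ_{k+1}(F_j)/μ_k(F_j). -/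
noncomputable def mRatio (μ : ℕ → Measure E) (F : ∀ k, I k → Set E) (k : ℕ) (j : I k) : ℝ :=
  (μ (k+1) (F k j)).toReal / (μ k (F k j)).toReal

/-- The successor set s_k(i) = {l ∈ I_k | p_j(l) = i} of i ∈ I_j. -/
def succSet (p : ∀ j k : ℕ, I k → I j) (j k : ℕ) (i : I j) : Finset (I k) :=
  Finset.univ.filter fun l => p j k l = i

/-- The product Π_{r=j}^{k-1} m_{r,r+1}(p_r(l)) of relative mass changes along
the branch leading to l ∈ I_k; its maximum over l ∈ s_k(i) is M_{j,k}(i). -/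
noncomputable def Mprod (μ : ℕ → Measure E) (F : ∀ k, I k → Set E) (p : ∀ j k : ℕ, I k → I j)
    (j k : ℕ) (l : I k) : ℝ :=
  ∏ r ∈ Finset.Ico j k, mRatio μ F r (p r k l)

/-- The propagator q_{j,k}(f) = ḡ_{j,j+1}·q̂_{j+1,k}(K_k(f)). -/
noncomputable def qFull (μ : ℕ → Measure E) (g : ℕ → E → ℝ) (K : ℕ → E → Measure E)
    (qhat : ℕ → ℕ → (E → ℝ) → E → ℝ) (j k : ℕ) (f : E → ℝ) : E → ℝ :=
  fun x => (g j x / (∫ z, g j z ∂(μ j))) * qhat (j+1) k (fun y => ∫ z, f z ∂(K k y)) x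

/-- The constant δ(2^r) = Π_{t=1}^{r} γ^{1-2^{-(t-1)}}/(1-α·γ^{2^t-2})^{2^{-t}}. -/
noncomputable def deltaP (α γ : ℝ) (r : ℕ) : ℝ :=
  ∏ t ∈ Finset.Icc 1 r,
    γ ^ (1 - (2:ℝ) ^ (1 - (t:ℝ))) / (1 - α * γ ^ ((2:ℝ) ^ t - 2)) ^ ((2:ℝ) ^ (-(t:ℝ)))

theorem biUnion_fiber_eq {ι κ α : Type*} [Fintype κ] [DecidableEq ι] {π : κ → ι}
    {A : ι → Set α} {B : κ → Set α} (hsub : ∀ l, B l ⊆ A (π l))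
    (hdisj : Pairwise fun a b => Disjoint (A a) (A b)) (hcover : ⋃ l, B l = Set.univ) (i : ι) :
    ⋃ l ∈ Finset.univ.filter (π · = i), B l = A i := by
  ext x
  simp only [Set.mem_iUnion, Finset.mem_filter, Finset.mem_univ, true_and, exists_prop]
  constructor
  · rintro ⟨l, rfl, hx⟩
    exact hsub l hx
  · intro hx
    obtain ⟨l, hl⟩ := Set.mem_iUnion.mp (hcover.symm ▸ Set.mem_univ x : x ∈ ⋃ l, B l)
    refine ⟨l, ?_, hl⟩
    by_contra hne
    exact Set.disjoint_left.mp (hdisj hne) (hsub l hl) hx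

theorem ae_mem_of_measure_eq_zero {ι : Type*} [Countable ι] {A : ι → Set E}
    (hcover : ⋃ j, A j = Set.univ) {ν : Measure E} {i : ι} (h : ∀ j, j ≠ i → ν (A j) = 0) :
    ∀ᵐ y ∂ν, y ∈ A i := by
  refine measure_mono_null (fun y hy => ?_)
    (measure_iUnion_null fun j => measure_iUnion_null fun (hj : j ≠ i) => h j hj)
  obtain ⟨j, hj⟩ := Set.mem_iUnion.mp (hcover.symm ▸ Set.mem_univ y : y ∈ ⋃ j, A j)
  exact Set.mem_iUnion₂.mpr ⟨j, fun hji => hy (hji ▸ hj), hj⟩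

section Localization

variable {μ : Measure E} {S : Set E}

theorem integral_muLoc (f : E → ℝ) :
    ∫ x, f x ∂(muLoc μ S) = (μ S).toReal⁻¹ * ∫ x in S, f x ∂μ := by
  rw [muLoc, integral_smul_measure, ENNReal.toReal_inv, smul_eq_mul]

theorem isProbabilityMeasure_muLoc [IsFiniteMeasure μ] (hS : μ S ≠ 0) :
    IsProbabilityMeasure (muLoc μ S) :=
  ⟨by rw [muLoc, Measure.smul_apply, Measure.restrict_apply_univ, smul_eq_mul,
    ENNReal.inv_mul_cancel hS (measure_ne_top μ S)]⟩

theorem ae_mem_muLoc (hS : MeasurableSet S) : ∀ᵐ x ∂(muLoc μ S), x ∈ S :=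
  Measure.ae_smul_measure (ae_restrict_mem hS) _

theorem exists_integral_muLoc_biUnion_le [IsFiniteMeasure μ] {ι : Type*} {s : Finset ι}
    (hs : s.Nonempty) {T : ι → Set E} (hT : ∀ l ∈ s, MeasurableSet (T l))
    (hdisj : Set.PairwiseDisjoint ↑s T) (hpos : ∀ l ∈ s, μ (T l) ≠ 0) {h : E → ℝ}
    (hh : Integrable h μ) :
    ∃ l ∈ s, ∫ x, h x ∂(muLoc μ (⋃ l ∈ s, T l)) ≤ ∫ x, h x ∂(muLoc μ (T l)) := by
  obtain ⟨l₀, hl₀, hmax⟩ := Finset.exists_mem_eq_sup' hs fun l => ∫ x, h x ∂(muLoc μ (T l))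
  refine ⟨l₀, hl₀, ?_⟩
  have hpiece : ∀ l ∈ s,
      ∫ x in T l, h x ∂μ ≤ (μ (T l)).toReal * ∫ x, h x ∂(muLoc μ (T l₀)) := by
    intro l hl
    have hle := hmax ▸ Finset.le_sup' (fun l => ∫ x, h x ∂(muLoc μ (T l))) hl
    rwa [integral_muLoc, inv_mul_le_iff₀ (ENNReal.toReal_pos (hpos l hl) (measure_ne_top μ _))]
      at hle
  have hmass : (μ (⋃ l ∈ s, T l)).toReal = ∑ l ∈ s, (μ (T l)).toReal := by
    rw [measure_biUnion_finset hdisj hT, ENNReal.toReal_sum fun l _ => measure_ne_top μ _]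
  have hunion : 0 < (μ (⋃ l ∈ s, T l)).toReal := ENNReal.toReal_pos
    (fun h0 => hpos l₀ hl₀ (measure_mono_null (Set.subset_biUnion_of_mem (u := T) hl₀) h0))
    (measure_ne_top μ _)
  rw [integral_muLoc, inv_mul_le_iff₀ hunion,
    integral_biUnion_finset s hT hdisj fun l _ => hh.integrableOn, hmass, Finset.sum_mul]
  exact Finset.sum_le_sum hpiece

end Localization

section LocalNorms

variable {ν : Measure E}

theorem locNorm_nonneg (p : ℝ) (f : E → ℝ) : 0 ≤ locNorm ν p f :=
  Real.rpow_nonneg (integral_nonneg fun _ => Real.rpow_nonneg (abs_nonneg _) _) _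

theorem locNorm_rpow {p : ℝ} (hp : p ≠ 0) (f : E → ℝ) :
    locNorm ν p f ^ p = ∫ x, |f x| ^ p ∂ν := by
  rw [locNorm, ← Real.rpow_mul (integral_nonneg fun _ => Real.rpow_nonneg (abs_nonneg _) _),
    one_div, inv_mul_cancel₀ hp, Real.rpow_one]

theorem locNorm_two_sq (f : E → ℝ) : locNorm ν 2 f ^ 2 = ∫ x, f x ^ 2 ∂ν := by
  rw [← Real.rpow_natCast, Nat.cast_ofNat, locNorm_rpow two_ne_zero]
  simp_rw [Real.rpow_two, sq_abs]

theorem integrable_abs_rpow_of_abs_le [IsFiniteMeasure ν] {f : E → ℝ} (hf : Measurable f)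
    {C : ℝ} (hfC : ∀ x, |f x| ≤ C) {r : ℝ} (hr : 0 ≤ r) : Integrable (fun x => |f x| ^ r) ν :=
  .of_bound (hf.abs.pow_const r).aestronglyMeasurable (C ^ r) (.of_forall fun x => by
    rw [Real.norm_of_nonneg (Real.rpow_nonneg (abs_nonneg _) _)]
    exact Real.rpow_le_rpow (abs_nonneg _) (hfC x) hr)

/-- Hölder's inequality for `p` and its conjugate exponent `q`, applied to
`G |f| = G ^ q⁻¹ * (G ^ p⁻¹ * |f|)`. -/
theorem integral_mul_abs_rpow_le [IsProbabilityMeasure ν] {G f : E → ℝ} {p B : ℝ}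
    (hp : 1 ≤ p) (hG : Measurable G) (hG0 : 0 ≤ G) (hGB : ∀ᵐ x ∂ν, G x ≤ B)
    (hf : Measurable f) {C : ℝ} (hfC : ∀ x, |f x| ≤ C) :
    (∫ x, G x * |f x| ∂ν) ^ p ≤ B ^ (p - 1) * ∫ x, G x * |f x| ^ p ∂ν := by
  obtain rfl | hp1 := hp.eq_or_lt
  · simp
  obtain ⟨x₀, hx₀⟩ := hGB.exists
  have hB : 0 ≤ B := (hG0 x₀).trans hx₀
  set q := p.conjExponent
  have hpq : p.HolderConjugate q := .conjExponent hp1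
  have hu : MemLp (fun x => G x ^ q⁻¹) (ENNReal.ofReal q) ν := by
    refine .of_bound (hG.pow_const _).aestronglyMeasurable (B ^ q⁻¹) ?_
    filter_upwards [hGB] with x hx
    rw [Real.norm_of_nonneg (Real.rpow_nonneg (hG0 x) _)]
    exact Real.rpow_le_rpow (hG0 x) hx (inv_nonneg.2 hpq.symm.nonneg)
  have hv : MemLp (fun x => G x ^ p⁻¹ * |f x|) (ENNReal.ofReal p) ν := by
    refine .of_bound ((hG.pow_const _).mul hf.abs).aestronglyMeasurable (B ^ p⁻¹ * C) ?_
    filter_upwards [hGB] with x hx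
    rw [Real.norm_of_nonneg (mul_nonneg (Real.rpow_nonneg (hG0 x) _) (abs_nonneg _))]
    exact mul_le_mul (Real.rpow_le_rpow (hG0 x) hx (inv_nonneg.2 hpq.nonneg)) (hfC x)
      (abs_nonneg _) (Real.rpow_nonneg hB _)
  have holder := integral_mul_le_Lp_mul_Lq_of_nonneg hpq.symm
    (.of_forall fun x => Real.rpow_nonneg (hG0 x) _)
    (.of_forall fun x => mul_nonneg (Real.rpow_nonneg (hG0 x) _) (abs_nonneg _)) hu hv
  have hprod : ∀ x, G x ^ q⁻¹ * (G x ^ p⁻¹ * |f x|) = G x * |f x| := fun x => by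
    rw [← mul_assoc, ← Real.rpow_add' (hG0 x) (by rw [add_comm, hpq.inv_add_inv_eq_one]; norm_num),
      add_comm, hpq.inv_add_inv_eq_one, Real.rpow_one]
  have hpow : ∀ x, (G x ^ p⁻¹ * |f x|) ^ p = G x * |f x| ^ p := fun x => by
    rw [Real.mul_rpow (Real.rpow_nonneg (hG0 x) _) (abs_nonneg _),
      Real.rpow_inv_rpow (hG0 x) hpq.ne_zero]
  simp only [hprod, hpow, Real.rpow_inv_rpow (hG0 _) hpq.symm.ne_zero] at holder
  have hGint : ∫ x, G x ∂ν ≤ B :=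
    (integral_mono_of_nonneg (.of_forall hG0) (integrable_const B) hGB).trans_eq (by simp)
  have hI : 0 ≤ ∫ x, G x * |f x| ^ p ∂ν :=
    integral_nonneg fun x => mul_nonneg (hG0 x) (Real.rpow_nonneg (abs_nonneg _) _)
  calc (∫ x, G x * |f x| ∂ν) ^ p
      ≤ ((∫ x, G x ∂ν) ^ (1 / q) * (∫ x, G x * |f x| ^ p ∂ν) ^ (1 / p)) ^ p :=
        Real.rpow_le_rpow (integral_nonneg fun x => mul_nonneg (hG0 x) (abs_nonneg _)) holder
          hpq.nonneg
    _ = (∫ x, G x ∂ν) ^ (p - 1) * ∫ x, G x * |f x| ^ p ∂ν := by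
        rw [Real.mul_rpow (Real.rpow_nonneg (integral_nonneg hG0) _) (Real.rpow_nonneg hI _),
          ← Real.rpow_mul (integral_nonneg hG0),
          ← Real.rpow_mul hI, one_div_mul_eq_div, hpq.div_conj_eq_sub_one,
          one_div_mul_cancel hpq.ne_zero, Real.rpow_one]
    _ ≤ B ^ (p - 1) * ∫ x, G x * |f x| ^ p ∂ν := by
        gcongr
        exact integral_nonneg hG0

theorem locNorm_le_locNorm_of_exponent_le [IsProbabilityMeasure ν] {p q : ℝ} (hp : 0 < p)
    (hpq : p ≤ q) {f : E → ℝ} (hf : Measurable f) {C : ℝ} (hfC : ∀ x, |f x| ≤ C) :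
    locNorm ν p f ≤ locNorm ν q f := by
  have hjensen := integral_mul_abs_rpow_le (ν := ν) (G := 1) (B := 1) (p := q / p)
    ((one_le_div hp).2 hpq) measurable_const zero_le_one (.of_forall fun _ => le_rfl)
    (hf.abs.pow_const p) (C := C ^ p) fun x => by
      rw [abs_of_nonneg (Real.rpow_nonneg (abs_nonneg _) _)]
      exact Real.rpow_le_rpow (abs_nonneg _) (hfC x) hp.le
  have hq : 0 < q := hp.trans_le hpq
  have hpow : ∀ x, (|f x| ^ p) ^ (q / p) = |f x| ^ q := fun x => by
    rw [← Real.rpow_mul (abs_nonneg _), mul_div_cancel₀ _ hp.ne']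
  simp only [Pi.one_apply, one_mul, Real.one_rpow,
    abs_of_nonneg (Real.rpow_nonneg (abs_nonneg _) _), hpow] at hjensen
  have hI : 0 ≤ ∫ x, |f x| ^ p ∂ν := integral_nonneg fun _ => Real.rpow_nonneg (abs_nonneg _) _
  calc locNorm ν p f = ((∫ x, |f x| ^ p ∂ν) ^ (q / p)) ^ (1 / q) := by
        rw [locNorm, ← Real.rpow_mul hI]
        congr 1
        field_simp
    _ ≤ locNorm ν q f := Real.rpow_le_rpow (Real.rpow_nonneg hI _) hjensen (by positivity)

theorem abs_integral_mul_rpow_two_mul_le {κ : Measure E} [IsProbabilityMeasure κ] {G f : E → ℝ}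
    {p B : ℝ} (hp : 1 ≤ p) (hG : Measurable G) (hG0 : 0 ≤ G) (hGB : ∀ᵐ y ∂κ, G y ≤ B)
    (hf : Measurable f) {C : ℝ} (hfC : ∀ x, |f x| ≤ C) :
    |∫ y, G y * f y ∂κ| ^ (2 * p) ≤ B ^ (2 * p - 2) * (∫ y, G y * |f y| ^ p ∂κ) ^ 2 := by
  obtain ⟨x₀, hx₀⟩ := hGB.exists
  have hB : 0 ≤ B := (hG0 x₀).trans hx₀
  have habs : |∫ y, G y * f y ∂κ| ≤ ∫ y, G y * |f y| ∂κ := by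
    refine abs_integral_le_integral_abs.trans_eq (integral_congr_ae (.of_forall fun y => ?_))
    simp only [abs_mul, abs_of_nonneg (hG0 y)]
  calc |∫ y, G y * f y ∂κ| ^ (2 * p) = (|∫ y, G y * f y ∂κ| ^ p) ^ 2 := by
        rw [mul_comm, ← Real.rpow_mul_natCast (abs_nonneg _), Nat.cast_ofNat]
    _ ≤ (B ^ (p - 1) * ∫ y, G y * |f y| ^ p ∂κ) ^ 2 := by
        gcongr
        exact (Real.rpow_le_rpow (abs_nonneg _) habs (by linarith)).trans
          (integral_mul_abs_rpow_le hp hG hG0 hGB hf hfC)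
    _ = B ^ (2 * p - 2) * (∫ y, G y * |f y| ^ p ∂κ) ^ 2 := by
        rw [mul_pow, ← Real.rpow_mul_natCast hB, Nat.cast_ofNat]
        ring_nf

end LocalNorms

theorem locNorm_integral_mul_rpow_le {ν₀ ν₁ : Measure E} [IsProbabilityMeasure ν₀] {S : Set E}
    (hν₀S : ∀ᵐ x ∂ν₀, x ∈ S) {κ : E → Measure E} [∀ x, IsProbabilityMeasure (κ x)]
    (hκ : Measurable κ) (hκS : ∀ x ∈ S, ∀ᵐ y ∂κ x, y ∈ S) {G : E → ℝ} (hG : Measurable G)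
    (hG0 : 0 ≤ G) {m γ : ℝ} (hm : 0 ≤ m) (hγ : 0 ≤ γ) (hGS : ∀ x ∈ S, G x ≤ γ * m)
    {f : E → ℝ} (hf : Measurable f) {C : ℝ} (hfC : ∀ x, |f x| ≤ C) {p α β : ℝ} (hp : 1 ≤ p)
    (hmix : locNorm ν₀ 2 (fun x => ∫ y, G y * |f y| ^ p ∂κ x) ^ 2
      ≤ m ^ 2 * (α * locNorm ν₁ 2 (fun y => |f y| ^ p) ^ 2 + β * (∫ y, |f y| ^ p ∂ν₁) ^ 2)) :
    locNorm ν₀ (2 * p) (fun x => ∫ y, G y * f y ∂κ x) ^ (2 * p)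
      ≤ m ^ (2 * p) * γ ^ (2 * p - 2)
          * (α * ∫ y, |f y| ^ (2 * p) ∂ν₁ + β * (∫ y, |f y| ^ p ∂ν₁) ^ 2) := by
  have hGB : ∀ x ∈ S, ∀ᵐ y ∂κ x, G y ≤ γ * m := fun x hx => (hκS x hx).mono hGS
  set Q : E → ℝ := fun x => ∫ y, G y * |f y| ^ p ∂κ x
  have hQ : Measurable Q :=
    (StronglyMeasurable.integral_kernel (κ := ⟨κ, hκ⟩)
      (hG.mul (hf.abs.pow_const p)).stronglyMeasurable).measurable
  have hQ_int : Integrable (fun x => Q x ^ 2) ν₀ := by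
    refine .of_bound (hQ.pow_const 2).aestronglyMeasurable ((γ * m * C ^ p) ^ 2) ?_
    filter_upwards [hν₀S] with x hx
    have hQx : ‖Q x‖ ≤ γ * m * C ^ p := by
      refine (norm_integral_le_of_norm_le_const (C := γ * m * C ^ p) ?_).trans_eq (by simp)
      filter_upwards [hGB x hx] with y hy
      rw [Real.norm_of_nonneg (mul_nonneg (hG0 y) (Real.rpow_nonneg (abs_nonneg _) _))]
      exact mul_le_mul hy (Real.rpow_le_rpow (abs_nonneg _) (hfC y) (by linarith))
        (Real.rpow_nonneg (abs_nonneg _) _) (by positivity)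
    rw [norm_pow]
    exact pow_le_pow_left₀ (norm_nonneg _) hQx 2
  have hpt : ∀ᵐ x ∂ν₀, |∫ y, G y * f y ∂κ x| ^ (2 * p) ≤ (γ * m) ^ (2 * p - 2) * Q x ^ 2 := by
    filter_upwards [hν₀S] with x hx
    exact abs_integral_mul_rpow_two_mul_le hp hG hG0 (hGB x hx) hf hfC
  have hsq : ∀ y, (|f y| ^ p) ^ 2 = |f y| ^ (2 * p) := fun y => by
    rw [← Real.rpow_mul_natCast (abs_nonneg _), Nat.cast_ofNat, mul_comm]
  calc locNorm ν₀ (2 * p) (fun x => ∫ y, G y * f y ∂κ x) ^ (2 * p)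
      = ∫ x, |∫ y, G y * f y ∂κ x| ^ (2 * p) ∂ν₀ := locNorm_rpow (by positivity) _
    _ ≤ ∫ x, (γ * m) ^ (2 * p - 2) * Q x ^ 2 ∂ν₀ :=
        integral_mono_of_nonneg (.of_forall fun _ => by positivity) (hQ_int.const_mul _) hpt
    _ = (γ * m) ^ (2 * p - 2) * locNorm ν₀ 2 Q ^ 2 := by rw [integral_const_mul, locNorm_two_sq]
    _ ≤ (γ * m) ^ (2 * p - 2) * (m ^ 2 * (α * locNorm ν₁ 2 (fun y => |f y| ^ p) ^ 2
          + β * (∫ y, |f y| ^ p ∂ν₁) ^ 2)) := by gcongr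
    _ = m ^ (2 * p) * γ ^ (2 * p - 2)
          * (α * ∫ y, |f y| ^ (2 * p) ∂ν₁ + β * (∫ y, |f y| ^ p ∂ν₁) ^ 2) := by
        have hm2 : m ^ (2 * p - 2) * m ^ 2 = m ^ (2 * p) := by
          rw [← Real.rpow_natCast, ← Real.rpow_add' hm (by norm_num; linarith)]
          norm_num
        simp_rw [locNorm_two_sq, hsq, Real.mul_rpow hγ hm, ← hm2]
        ring

section Refinement

variable {μ : Measure E} [IsFiniteMeasure μ] {ι : Type*} {s : Finset ι} {T : ι → Set E}
  {f : E → ℝ} {r : ℝ}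

theorem integral_abs_rpow_muLoc_biUnion_le (hs : s.Nonempty) (hT : ∀ l ∈ s, MeasurableSet (T l))
    (hdisj : Set.PairwiseDisjoint ↑s T) (hpos : ∀ l ∈ s, μ (T l) ≠ 0) (hf : Measurable f)
    {C : ℝ} (hfC : ∀ x, |f x| ≤ C) (hr : 0 < r) :
    ∫ x, |f x| ^ r ∂(muLoc μ (⋃ l ∈ s, T l))
      ≤ s.sup' hs fun l => locNorm (muLoc μ (T l)) r f ^ r := by
  obtain ⟨l, hl, hle⟩ := exists_integral_muLoc_biUnion_le hs hT hdisj hpos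
    (integrable_abs_rpow_of_abs_le hf hfC hr.le)
  exact Finset.le_sup'_of_le _ hl (hle.trans_eq (locNorm_rpow hr.ne' f).symm)

theorem sq_integral_abs_rpow_muLoc_biUnion_le (hs : s.Nonempty)
    (hT : ∀ l ∈ s, MeasurableSet (T l)) (hdisj : Set.PairwiseDisjoint ↑s T)
    (hpos : ∀ l ∈ s, μ (T l) ≠ 0) (hf : Measurable f) {C : ℝ} (hfC : ∀ x, |f x| ≤ C)
    (hr : 0 < r) :
    (∫ x, |f x| ^ r ∂(muLoc μ (⋃ l ∈ s, T l))) ^ 2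
      ≤ s.sup' hs fun l => locNorm (muLoc μ (T l)) r f ^ (2 * r) := by
  obtain ⟨l, hl, hle⟩ := exists_integral_muLoc_biUnion_le hs hT hdisj hpos
    (integrable_abs_rpow_of_abs_le hf hfC hr.le)
  refine Finset.le_sup'_of_le _ hl ?_
  rw [mul_comm, show r * 2 = r * (2 : ℕ) by norm_num, Real.rpow_mul_natCast (locNorm_nonneg _ _),
    locNorm_rpow hr.ne']
  exact pow_le_pow_left₀ (integral_nonneg fun _ => Real.rpow_nonneg (abs_nonneg _) _) hle 2

end Refinement

theorem locNorm_integral_mul_rpow_le_sup' {μ₀ μ₁ : Measure E} [IsFiniteMeasure μ₀]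
    [IsFiniteMeasure μ₁] {ι : Type*} {s : Finset ι} (hs : s.Nonempty) {T : ι → Set E}
    (hT : ∀ l ∈ s, MeasurableSet (T l)) (hdisj : Set.PairwiseDisjoint ↑s T)
    (hpos : ∀ l ∈ s, μ₁ (T l) ≠ 0) {S : Set E} (hST : ⋃ l ∈ s, T l = S) (hμ₀S : μ₀ S ≠ 0)
    (hμ₁S : μ₁ S ≠ 0) {κ : E → Measure E} [∀ x, IsProbabilityMeasure (κ x)] (hκ : Measurable κ)
    (hκS : ∀ x ∈ S, ∀ᵐ y ∂κ x, y ∈ S) {G : E → ℝ} (hG : Measurable G) (hG0 : 0 ≤ G) {γ : ℝ}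
    (hγ : 0 ≤ γ) (hGS : ∀ x ∈ S, (μ₀ S).toReal / (μ₁ S).toReal * G x ≤ γ)
    {α β : ℝ} (hα : 0 ≤ α) (hβ : 0 ≤ β)
    (hmix : ∀ h : E → ℝ, Measurable h → (∃ C : ℝ, ∀ x, |h x| ≤ C) →
      locNorm (muLoc μ₀ S) 2 (fun x => ∫ y, G y * h y ∂κ x) ^ 2
        ≤ ((μ₁ S).toReal / (μ₀ S).toReal) ^ 2
          * (α * locNorm (muLoc μ₁ S) 2 h ^ 2 + β * (∫ y, h y ∂(muLoc μ₁ S)) ^ 2))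
    {f : E → ℝ} (hf : Measurable f) {C : ℝ} (hfC : ∀ x, |f x| ≤ C) {p : ℝ} (hp : 1 ≤ p) :
    locNorm (muLoc μ₀ S) (2 * p) (fun x => ∫ y, G y * f y ∂κ x) ^ (2 * p)
      ≤ ((μ₁ S).toReal / (μ₀ S).toReal) ^ (2 * p) * γ ^ (2 * p - 2)
          * (α * s.sup' hs (fun l => locNorm (muLoc μ₁ (T l)) (2 * p) f ^ (2 * p))
            + β * s.sup' hs (fun l => locNorm (muLoc μ₁ (T l)) p f ^ (2 * p))) := by
  have := isProbabilityMeasure_muLoc hμ₀S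
  have ha : 0 < (μ₀ S).toReal := ENNReal.toReal_pos hμ₀S (measure_ne_top μ₀ S)
  have hb : 0 < (μ₁ S).toReal := ENNReal.toReal_pos hμ₁S (measure_ne_top μ₁ S)
  have hGS' : ∀ x ∈ S, G x ≤ γ * ((μ₁ S).toReal / (μ₀ S).toReal) := fun x hx => by
    have := hGS x hx
    rw [div_mul_eq_mul_div, div_le_iff₀ hb] at this
    rw [← mul_div_assoc, le_div_iff₀ ha]
    linarith
  have hS : MeasurableSet S := hST ▸ Finset.measurableSet_biUnion s hT
  have hfp : ∀ x, |(fun y => |f y| ^ p) x| ≤ C ^ p := fun x => by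
    rw [abs_of_nonneg (Real.rpow_nonneg (abs_nonneg _) _)]
    exact Real.rpow_le_rpow (abs_nonneg _) (hfC x) (by positivity)
  refine (locNorm_integral_mul_rpow_le (ae_mem_muLoc hS) hκ hκS hG hG0 (by positivity) hγ hGS'
    hf hfC hp (hmix _ (hf.abs.pow_const p) ⟨_, hfp⟩)).trans ?_
  subst hST
  gcongr
  · exact integral_abs_rpow_muLoc_biUnion_le hs hT hdisj hpos hf hfC (by positivity)
  · exact sq_integral_abs_rpow_muLoc_biUnion_le hs hT hdisj hpos hf hfC (by positivity)

theorem maxNorm_rpow_le_of_forall_locNorm_rpow_le {J : ℕ → Type} [∀ k, Fintype (J k)]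
    [∀ k, Nonempty (J k)] {μ : ℕ → Measure E} {F : ∀ k, J k → Set E} {k : ℕ}
    {s : J k → Finset (J (k + 1))} (hs : ∀ i, (s i).Nonempty) {h f : E → ℝ}
    {p α β γ : ℝ} (hp : 0 < p) (hα : 0 ≤ α) (hβ : 0 ≤ β) (hγ : 0 ≤ γ)
    (hmono : ∀ l, locNorm (muLoc (μ (k + 1)) (F (k + 1) l)) p f
      ≤ locNorm (muLoc (μ (k + 1)) (F (k + 1) l)) (2 * p) f)
    (hloc : ∀ i, locNorm (muLoc (μ k) (F k i)) (2 * p) h ^ (2 * p)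
      ≤ mRatio μ F k i ^ (2 * p) * γ ^ (2 * p - 2)
        * (α * (s i).sup' (hs i)
              (fun l => locNorm (muLoc (μ (k + 1)) (F (k + 1) l)) (2 * p) f ^ (2 * p))
          + β * (s i).sup' (hs i)
              (fun l => locNorm (muLoc (μ (k + 1)) (F (k + 1) l)) p f ^ (2 * p)))) :
    maxNorm μ F k (2 * p) h ^ (2 * p)
      ≤ (Finset.univ.sup' Finset.univ_nonempty fun i : J k => mRatio μ F k i) ^ (2 * p)
        * γ ^ (2 * p - 2) * (α + β) * maxNorm μ F (k + 1) (2 * p) f ^ (2 * p) := by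
  obtain ⟨i, -, hi⟩ := Finset.exists_mem_eq_sup' Finset.univ_nonempty
    fun i : J k => locNorm (muLoc (μ k) (F k i)) (2 * p) h
  have hsup : ∀ q : ℝ, (∀ l, locNorm (muLoc (μ (k + 1)) (F (k + 1) l)) q f
      ≤ locNorm (muLoc (μ (k + 1)) (F (k + 1) l)) (2 * p) f) →
      (s i).sup' (hs i) (fun l => locNorm (muLoc (μ (k + 1)) (F (k + 1) l)) q f ^ (2 * p))
        ≤ maxNorm μ F (k + 1) (2 * p) f ^ (2 * p) := fun q hq =>
    Finset.sup'_le _ _ fun l _ => Real.rpow_le_rpow (locNorm_nonneg _ _)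
      ((hq l).trans (Finset.le_sup' (fun l : J (k + 1) =>
        locNorm (muLoc (μ (k + 1)) (F (k + 1) l)) (2 * p) f) (Finset.mem_univ l))) (by positivity)
  have hS0 : ∀ q : ℝ, 0 ≤ (s i).sup' (hs i)
      (fun l => locNorm (muLoc (μ (k + 1)) (F (k + 1) l)) q f ^ (2 * p)) := fun q =>
    Finset.le_sup'_of_le _ (hs i).choose_spec (Real.rpow_nonneg (locNorm_nonneg _ _) _)
  have hm : 0 ≤ mRatio μ F k i := div_nonneg ENNReal.toReal_nonneg ENNReal.toReal_nonneg
  have hmA := Finset.le_sup' (fun i : J k => mRatio μ F k i) (Finset.mem_univ i)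
  have hA := hm.trans hmA
  have h2p := hsup _ fun _ => le_rfl
  have hp' := hsup _ hmono
  rw [maxNorm, hi]
  set A := Finset.univ.sup' Finset.univ_nonempty fun i : J k => mRatio μ F k i
  set X := maxNorm μ F (k + 1) (2 * p) f ^ (2 * p)
  calc _ ≤ _ := hloc i
    _ ≤ A ^ (2 * p) * γ ^ (2 * p - 2) * (α * X + β * X) := by
        gcongr
        exact add_nonneg (mul_nonneg hα (hS0 _)) (mul_nonneg hβ (hS0 _))
    _ = A ^ (2 * p) * γ ^ (2 * p - 2) * (α + β) * X := by ring

theorem stmt_15_general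
    (n : ℕ) (μ : ℕ → Measure E)
    (hμprob : ∀ k, k ≤ n → IsProbabilityMeasure (μ k))
    (hμac : ∀ j k, j ≤ n → k ≤ n → μ j ≪ μ k)
    (g : ℕ → E → ℝ)
    (hgmeas : ∀ k, Measurable (g k))
    (hgpos : ∀ k x, 0 < g k x)
    (K : ℕ → E → Measure E)
    (hKprob : ∀ k x, IsProbabilityMeasure (K k x))
    (hKmeas : ∀ k (A : Set E), MeasurableSet A → Measurable fun x => K k x A)
    (F : ∀ k, I k → Set E)
    (hFmeas : ∀ k j, MeasurableSet (F k j))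
    (hFpos : ∀ k, k ≤ n → ∀ j, 0 < μ 0 (F k j))
    (hFdisj : ∀ k, k ≤ n → ∀ j j' : I k, j ≠ j' → Disjoint (F k j) (F k j'))
    (hFcover : ∀ k, k ≤ n → (⋃ j : I k, F k j) = Set.univ)
    (p : ∀ j k : ℕ, I k → I j)
    (hp : ∀ j k, j < k → k ≤ n → ∀ l : I k, F k l ⊆ F j (p j k l))
    (hsne : ∀ (j k : ℕ) (_ : j < k) (_ : k ≤ n) (i : I j), (succSet p j k i).Nonempty)
    (hD : ∀ k, 1 ≤ k → k ≤ n → ∀ (j : I k) (x : E), x ∉ F k j → K k x (F k j) = 0)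
    (qhat : ℕ → ℕ → (E → ℝ) → E → ℝ)
    (hqdiag : ∀ k f, qhat k k f = f)
    (hqstep : ∀ j k, j < k → k ≤ n → ∀ (f : E → ℝ) (x : E),
      qhat j k f x = ∫ y, (g j y / (∫ z, g j z ∂(μ j))) * qhat (j+1) k f y ∂(K j x))
    (α β : ℝ) (hα : 0 < α) (hβ0 : 0 ≤ β)
    (hM : ∀ k, 1 ≤ k → k < n → ∀ (i : I k) (f : E → ℝ),
      Measurable f → (∃ C : ℝ, ∀ x, |f x| ≤ C) →
      (locNorm (muLoc (μ k) (F k i)) 2 (qhat k (k+1) f))^2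
        ≤ (mRatio μ F k i)^2 *
            (α * (locNorm (muLoc (μ (k+1)) (F k i)) 2 f)^2
              + β * (∫ x, f x ∂(muLoc (μ (k+1)) (F k i)))^2))
    (γ : ℝ) (hγ : 1 ≤ γ)
    (hB : ∀ k, k < n → ∀ (j : I k) (x : E), x ∈ F k j →
      ((μ k (F k j)).toReal / (μ (k+1) (F k j)).toReal)
        * (g k x / (∫ z, g k z ∂(μ k))) ≤ γ)
 :
    ∀ (k : ℕ), 1 ≤ k → ∀ (hkn : k < n) (preal : ℝ), 1 ≤ preal →
      ∀ f : E → ℝ, Measurable f → (∃ C : ℝ, ∀ x, |f x| ≤ C) →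
      (∀ i : I k,
        (locNorm (muLoc (μ k) (F k i)) (2*preal) (qhat k (k+1) f)) ^ (2*preal)
          ≤ (mRatio μ F k i) ^ (2*preal) * γ ^ (2*preal - 2) *
              (α * ((succSet p k (k+1) i).sup' (hsne k (k+1) (Nat.lt_succ_self k) hkn i)
                      fun l => (locNorm (muLoc (μ (k+1)) (F (k+1) l)) (2*preal) f) ^ (2*preal))
               + β * ((succSet p k (k+1) i).sup' (hsne k (k+1) (Nat.lt_succ_self k) hkn i)
                      fun l => (locNorm (muLoc (μ (k+1)) (F (k+1) l)) preal f) ^ (2*preal))))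
      ∧ (maxNorm μ F k (2*preal) (qhat k (k+1) f)) ^ (2*preal)
          ≤ (Finset.univ.sup' Finset.univ_nonempty fun i : I k => mRatio μ F k i) ^ (2*preal)
            * γ ^ (2*preal - 2) * (α + β)
            * (maxNorm μ F (k+1) (2*preal) f) ^ (2*preal) := by
  intro k hk1 hkn preal hpreal f hf ⟨C, hfC⟩
  have hk : k ≤ n := hkn.le
  have hne : ∀ m ≤ n, ∀ j ≤ n, ∀ l : I j, μ m (F j l) ≠ 0 := fun m hm j hj l h0 =>
    (hFpos j hj l).ne' (hμac 0 m (Nat.zero_le n) hm h0)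
  have := hμprob k hk
  have := hμprob (k + 1) hkn
  have := hKprob k
  set G : E → ℝ := fun y => g k y / ∫ z, g k z ∂(μ k)
  have hG0 : 0 ≤ G := fun y => div_nonneg (hgpos k y).le (integral_nonneg fun z => (hgpos k z).le)
  have hq : ∀ h, qhat k (k + 1) h = fun x => ∫ y, G y * h y ∂(K k x) := fun h =>
    funext fun x => by rw [hqstep k (k + 1) k.lt_succ_self hkn, hqdiag]
  have hstay : ∀ i, ∀ x ∈ F k i, ∀ᵐ y ∂(K k x), y ∈ F k i := fun i x hx =>
    ae_mem_of_measure_eq_zero (hFcover k hk) fun j hji =>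
      hD k hk1 hk j x (Set.disjoint_left.mp (hFdisj k hk i j hji.symm) hx)
  have hsucc : ∀ i, ⋃ l ∈ succSet p k (k + 1) i, F (k + 1) l = F k i :=
    biUnion_fiber_eq (hp k (k + 1) k.lt_succ_self hkn) (fun a b => hFdisj k hk a b)
      (hFcover (k + 1) hkn)
  rw [hq]
  have hlocal := fun i : I k => locNorm_integral_mul_rpow_le_sup'
    (hsne k (k + 1) k.lt_succ_self hkn i) (fun l _ => hFmeas (k + 1) l)
    (fun a _ b _ hab => hFdisj (k + 1) hkn a b hab) (fun l _ => hne (k + 1) hkn (k + 1) hkn l)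
    (hsucc i) (hne k hk k hk i) (hne (k + 1) hkn k hk i)
    (Measure.measurable_of_measurable_coe _ (hKmeas k)) (hstay i) ((hgmeas k).div_const _) hG0
    (by linarith) (hB k hkn i) hα.le hβ0 (fun h hh hhC => hq h ▸ hM k hk1 hkn i h hh hhC)
    hf hfC hpreal
  refine ⟨hlocal, maxNorm_rpow_le_of_forall_locNorm_rpow_le _ (by linarith) hα.le hβ0
    (by linarith) (fun l => ?_) hlocal⟩
  have := isProbabilityMeasure_muLoc (hne (k + 1) hkn (k + 1) hkn l)
  exact locNorm_le_locNorm_of_exponent_le (by linarith) (by linarith) hf hfC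

theorem stmt_15
    (n : ℕ) (μ : ℕ → Measure E)
    (hμprob : ∀ k, k ≤ n → IsProbabilityMeasure (μ k))
    (hμac : ∀ j k, j ≤ n → k ≤ n → μ j ≪ μ k)
    (g : ℕ → E → ℝ)
    (hgmeas : ∀ k, Measurable (g k))
    (hgpos : ∀ k x, 0 < g k x)
    (hgbdd : ∀ k, ∃ C : ℝ, ∀ x, g k x ≤ C)
    (hgdens : ∀ k, k < n → ∀ f : E → ℝ, Measurable f → (∃ C : ℝ, ∀ x, |f x| ≤ C) →
      (∫ x, f x ∂(μ (k+1))) = (∫ x, f x * g k x ∂(μ k)) / (∫ x, g k x ∂(μ k)))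
    (K : ℕ → E → Measure E)
    (hKprob : ∀ k x, IsProbabilityMeasure (K k x))
    (hKmeas : ∀ k (A : Set E), MeasurableSet A → Measurable fun x => K k x A)
    (hKinv : ∀ k, k ≤ n → (μ k).bind (K k) = μ k)
    (F : ∀ k, I k → Set E)
    (hFmeas : ∀ k j, MeasurableSet (F k j))
    (hFpos : ∀ k, k ≤ n → ∀ j, 0 < μ 0 (F k j))
    (hFdisj : ∀ k, k ≤ n → ∀ j j' : I k, j ≠ j' → Disjoint (F k j) (F k j'))
    (hFcover : ∀ k, k ≤ n → (⋃ j : I k, F k j) = Set.univ)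
    (p : ∀ j k : ℕ, I k → I j)
    (hp : ∀ j k, j < k → k ≤ n → ∀ l : I k, F k l ⊆ F j (p j k l))
    (hsne : ∀ (j k : ℕ) (_ : j < k) (_ : k ≤ n) (i : I j), (succSet p j k i).Nonempty)
    (hD : ∀ k, 1 ≤ k → k ≤ n → ∀ (j : I k) (x : E), x ∉ F k j → K k x (F k j) = 0)
    (qhat : ℕ → ℕ → (E → ℝ) → E → ℝ)
    (hqdiag : ∀ k f, qhat k k f = f)
    (hqstep : ∀ j k, j < k → k ≤ n → ∀ (f : E → ℝ) (x : E),
      qhat j k f x = ∫ y, (g j y / (∫ z, g j z ∂(μ j))) * qhat (j+1) k f y ∂(K j x))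
    (α β : ℝ) (hα : 0 < α) (hβ0 : 0 ≤ β) (hβ1 : β ≤ 1)
    (hM : ∀ k, 1 ≤ k → k < n → ∀ (i : I k) (f : E → ℝ),
      Measurable f → (∃ C : ℝ, ∀ x, |f x| ≤ C) →
      (locNorm (muLoc (μ k) (F k i)) 2 (qhat k (k+1) f))^2
        ≤ (mRatio μ F k i)^2 *
            (α * (locNorm (muLoc (μ (k+1)) (F k i)) 2 f)^2
              + β * (∫ x, f x ∂(muLoc (μ (k+1)) (F k i)))^2))
    (γ : ℝ) (hγ : 1 ≤ γ)
    (hB : ∀ k, k < n → ∀ (j : I k) (x : E), x ∈ F k j →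
      ((μ k (F k j)).toReal / (μ (k+1) (F k j)).toReal)
        * (g k x / (∫ z, g k z ∂(μ k))) ≤ γ)
 :
    ∀ (k : ℕ), 1 ≤ k → ∀ (hkn : k < n) (preal : ℝ), 1 ≤ preal →
      ∀ f : E → ℝ, Measurable f → (∃ C : ℝ, ∀ x, |f x| ≤ C) →
      (∀ i : I k,
        (locNorm (muLoc (μ k) (F k i)) (2*preal) (qhat k (k+1) f)) ^ (2*preal)
          ≤ (mRatio μ F k i) ^ (2*preal) * γ ^ (2*preal - 2) *
              (α * ((succSet p k (k+1) i).sup' (hsne k (k+1) (Nat.lt_succ_self k) hkn i)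
                      fun l => (locNorm (muLoc (μ (k+1)) (F (k+1) l)) (2*preal) f) ^ (2*preal))
               + β * ((succSet p k (k+1) i).sup' (hsne k (k+1) (Nat.lt_succ_self k) hkn i)
                      fun l => (locNorm (muLoc (μ (k+1)) (F (k+1) l)) preal f) ^ (2*preal))))
      ∧ (maxNorm μ F k (2*preal) (qhat k (k+1) f)) ^ (2*preal)
          ≤ (Finset.univ.sup' Finset.univ_nonempty fun i : I k => mRatio μ F k i) ^ (2*preal)
            * γ ^ (2*preal - 2) * (α + β)
            * (maxNorm μ F (k+1) (2*preal) f) ^ (2*preal) :=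
  stmt_15_general n μ hμprob hμac g hgmeas hgpos K hKprob hKmeas F hFmeas hFpos hFdisj hFcover p hp
    hsne hD qhat hqdiag hqstep α β hα hβ0 hM γ hγ hB
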